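/- arXiv:2306.01240 — 7 statements merged into one kernel-verified Lean document; each statement's English description precedes it below -/
import Mathlib

section
/- Let F be a continuous strictly increasing CDF, θ ∈ (0,1), and for τ > 0 define z_τ = sigmoid((F⁻¹(θ) − s)/τ) where s ∼ F. Then as τ → 0⁺, the distribution of z_τ converges in distribution to the Bernoulli distribution with success probability θ (i.e., P(z_τ ≤ t) → 1 − θ for every fixed t ∈ (0,1)). -/
open MeasureTheory Real Set Filter

noncomputable def sigmoid (x : ℝ) : ℝ := 1 / (1 + Real.exp (-x))

lemma sigmoid_le_iff {t : ℝ} (ht : t ∈ Set.Ioo (0:ℝ) 1) (x : ℝ) :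
    _root_.sigmoid x ≤ t ↔ x ≤ Real.log (t / (1 - t)) := by
  obtain ⟨ht0, ht1⟩ := ht
  have h1 : (0:ℝ) < 1 + Real.exp (-x) := by positivity
  have h2 : (0:ℝ) < (1 - t) / t := by
    apply div_pos <;> linarith
  unfold _root_.sigmoid
  rw [div_le_iff₀ h1]
  constructor
  · intro h
    have h3 : (1 - t) / t ≤ Real.exp (-x) := by
      rw [div_le_iff₀ ht0]
      nlinarith
    have h4 : Real.log ((1 - t) / t) ≤ -x := by
      rw [Real.log_le_iff_le_exp h2]; exact h3
    have h5 : Real.log ((1 - t) / t) = - Real.log (t / (1 - t)) := by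
      rw [Real.log_div (by linarith) (by linarith),
          Real.log_div (by linarith) (by linarith)]
      ring
    linarith
  · intro h
    have h4 : Real.log ((1 - t) / t) ≤ -x := by
      have h5 : Real.log ((1 - t) / t) = - Real.log (t / (1 - t)) := by
        rw [Real.log_div (by linarith) (by linarith),
            Real.log_div (by linarith) (by linarith)]
        ring
      linarith
    have h3 : (1 - t) / t ≤ Real.exp (-x) := by
      rw [← Real.log_le_iff_le_exp h2] at *; exact h4
    have h6 : 1 - t ≤ t * Real.exp (-x) := by
      rw [div_le_iff₀ ht0] at h3; nlinarith
    nlinarith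

lemma measure_Ici_toReal (μ : Measure ℝ) [IsProbabilityMeasure μ]
    (F : ℝ → ℝ) (hF : ∀ x, F x = (μ (Set.Iic x)).toReal)
    (hcont : Continuous F) (a : ℝ) :
    (μ (Set.Ici a)).toReal = 1 - F a := by
  -- μ {a} = 0
  have hatom : μ {a} = 0 := by
    have hle : ∀ b < a, (μ {a}).toReal ≤ F a - F b := by
      intro b hb
      have hsub : {a} ⊆ Set.Ioc b a := by
        intro x hx; simp only [Set.mem_singleton_iff] at hx; subst hx
        exact ⟨hb, le_rfl⟩
      have hdiff : Set.Iic a \ Set.Iic b = Set.Ioc b a := Set.Iic_sdiff_Iic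
      have hmd : μ (Set.Ioc b a) = μ (Set.Iic a) - μ (Set.Iic b) := by
        rw [← hdiff]
        exact measure_diff (Set.Iic_subset_Iic.mpr hb.le) measurableSet_Iic.nullMeasurableSet
          (measure_ne_top μ _)
      have h1 : (μ {a}).toReal ≤ (μ (Set.Ioc b a)).toReal := by
        apply ENNReal.toReal_mono (measure_ne_top μ _) (measure_mono hsub)
      have h2 : (μ (Set.Ioc b a)).toReal = F a - F b := by
        rw [hmd, ENNReal.toReal_sub_of_le (measure_mono (Set.Iic_subset_Iic.mpr hb.le))
          (measure_ne_top μ _), hF, hF]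
      linarith
    have hten : Tendsto (fun b => F a - F b) (nhdsWithin a (Set.Iio a)) (nhds 0) := by
      have : Tendsto (fun b => F a - F b) (nhds a) (nhds (F a - F a)) :=
        tendsto_const_nhds.sub (hcont.tendsto a)
      simpa using this.mono_left nhdsWithin_le_nhds
    have hle0 : (μ {a}).toReal ≤ 0 := by
      refine ge_of_tendsto hten ?_
      filter_upwards [self_mem_nhdsWithin] with b hb
      exact hle b hb
    have : (μ {a}).toReal = 0 := le_antisymm hle0 ENNReal.toReal_nonneg
    exact (ENNReal.toReal_eq_zero_iff _).mp this |>.resolve_right (measure_ne_top μ _)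
  have hIci : μ (Set.Ici a) = μ (Set.Ioi a) := by
    apply le_antisymm
    · calc μ (Set.Ici a) = μ ({a} ∪ Set.Ioi a) := by rw [Set.singleton_union, Set.Ioi_insert]
        _ ≤ μ {a} + μ (Set.Ioi a) := measure_union_le _ _
        _ = μ (Set.Ioi a) := by rw [hatom, zero_add]
    · exact measure_mono Set.Ioi_subset_Ici_self
  have hIoi : μ (Set.Ioi a) = 1 - μ (Set.Iic a) := by
    rw [← Set.compl_Iic, measure_compl measurableSet_Iic (measure_ne_top μ _),
      measure_univ]
  rw [hIci, hIoi, ENNReal.toReal_sub_of_le (by exact prob_le_one) (by simp), hF]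
  simp

/-- As τ → 0⁺, the ICDF-reparameterized variable converges in distribution to Ber(θ). -/
theorem stmt1
    (μ : Measure ℝ) [IsProbabilityMeasure μ]
    (F Finv : ℝ → ℝ)
    (hF : ∀ x, F x = (μ (Iic x)).toReal)
    (hcont : Continuous F)
    (hmono : StrictMono F)
    (hFinv : ∀ p ∈ Ioo (0:ℝ) 1, F (Finv p) = p)
    (θ : ℝ) (hθ : θ ∈ Ioo (0:ℝ) 1)
    (t : ℝ) (ht : t ∈ Ioo (0:ℝ) 1) :
    Tendsto (fun τ : ℝ => (μ {s | _root_.sigmoid ((Finv θ - s) / τ) ≤ t}).toReal)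
      (nhdsWithin 0 (Ioi 0)) (nhds (1 - θ)) := by
  set c : ℝ := Real.log (t / (1 - t)) with hc
  have key : ∀ τ : ℝ, 0 < τ →
      {s | _root_.sigmoid ((Finv θ - s) / τ) ≤ t} = Set.Ici (Finv θ - τ * c) := by
    intro τ hτ
    ext s
    simp only [Set.mem_setOf_eq, Set.mem_Ici]
    rw [sigmoid_le_iff ht, div_le_iff₀ hτ]
    constructor <;> intro h <;> nlinarith
  have heq : (fun τ : ℝ => (μ {s | _root_.sigmoid ((Finv θ - s) / τ) ≤ t}).toReal)
      =ᶠ[nhdsWithin 0 (Set.Ioi 0)] fun τ => 1 - F (Finv θ - τ * c) := by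
    filter_upwards [self_mem_nhdsWithin] with τ hτ
    rw [key τ hτ, measure_Ici_toReal μ F hF hcont]
  refine Tendsto.congr' heq.symm ?_
  have h1 : Tendsto (fun τ : ℝ => Finv θ - τ * c) (nhdsWithin 0 (Set.Ioi 0))
      (nhds (Finv θ)) := by
    have : Tendsto (fun τ : ℝ => Finv θ - τ * c) (nhds 0) (nhds (Finv θ - 0 * c)) :=
      tendsto_const_nhds.sub ((continuous_id.mul continuous_const).tendsto 0)
    simpa using this.mono_left nhdsWithin_le_nhds
  have h2 : Tendsto (fun τ : ℝ => F (Finv θ - τ * c)) (nhdsWithin 0 (Set.Ioi 0))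
      (nhds θ) := by
    have := (hcont.tendsto (Finv θ)).comp h1
    rwa [hFinv θ hθ] at this
  simpa using tendsto_const_nhds.sub h2
end

section
/- Let g₁, g₂ be independent standard Gumbel random variables, θ ∈ (0,1), τ > 0, and let (y₁, y₂) = softmax((log θ + g₁)/τ, (log(1−θ) + g₂)/τ). Then for all t ∈ [0,1], P(y₁ ≤ t) = t^τ (1−θ) / (t^τ (1−θ) + (1−t)^τ θ). -/
open MeasureTheory Real Set

/-- CDF of the first coordinate of the Gumbel-softmax relaxed Bernoulli sample. -/
theorem stmt2
    (θ τ : ℝ) (hθ : θ ∈ Ioo (0:ℝ) 1) (hτ : 0 < τ)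
    (μ : Measure (ℝ × ℝ))
    (hμ : μ = ((volume.restrict (Ioo (0:ℝ) 1)).prod (volume.restrict (Ioo (0:ℝ) 1))))
    (g₁ g₂ : ℝ → ℝ)
    (hg₁ : ∀ u, g₁ u = -Real.log (-Real.log u))
    (hg₂ : ∀ v, g₂ v = -Real.log (-Real.log v))
    (y₁ : ℝ × ℝ → ℝ)
    (hy₁ : ∀ p, y₁ p =
      Real.exp ((Real.log θ + g₁ p.1) / τ) /
        (Real.exp ((Real.log θ + g₁ p.1) / τ) + Real.exp ((Real.log (1 - θ) + g₂ p.2) / τ)))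
    (t : ℝ) (ht : t ∈ Icc (0:ℝ) 1) :
    (μ {p | y₁ p ≤ t}).toReal =
      t ^ τ * (1 - θ) / (t ^ τ * (1 - θ) + (1 - t) ^ τ * θ) := by
  obtain ⟨hθ0, hθ1⟩ := hθ
  have h1θ : 0 < 1 - θ := by linarith
  rcases eq_or_lt_of_le ht.1 with h0 | h0
  · -- t = 0
    have hset : {p : ℝ × ℝ | y₁ p ≤ t} = ∅ := by
      ext p
      simp only [mem_setOf_eq, mem_empty_iff_false, iff_false, not_le, ← h0]
      rw [hy₁]
      positivity
    rw [hset, measure_empty, ← h0, Real.zero_rpow (ne_of_gt hτ)]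
    simp
  rcases eq_or_lt_of_le ht.2 with h1 | h1
  · -- t = 1
    have hset : {p : ℝ × ℝ | y₁ p ≤ t} = univ := by
      ext p
      simp only [mem_setOf_eq, mem_univ, iff_true, h1]
      rw [hy₁]
      have hA : 0 < Real.exp ((Real.log θ + g₁ p.1) / τ) := Real.exp_pos _
      have hB : 0 < Real.exp ((Real.log (1 - θ) + g₂ p.2) / τ) := Real.exp_pos _
      rw [div_le_one (by linarith)]
      linarith
    rw [hset, hμ, ← univ_prod_univ, Measure.prod_prod]
    rw [Measure.restrict_apply_univ, Real.volume_Ioo, h1]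
    rw [Real.one_rpow, sub_self, Real.zero_rpow (ne_of_gt hτ)]
    norm_num
    rw [div_self (by linarith)]
  -- main case 0 < t < 1
  have ht1 : 0 < 1 - t := by linarith
  have htτ : 0 < t ^ τ := Real.rpow_pos_of_pos h0 τ
  have h1tτ : 0 < (1 - t) ^ τ := Real.rpow_pos_of_pos ht1 τ
  set k : ℝ := t ^ τ * (1 - θ) / ((1 - t) ^ τ * θ) with hk
  have hkpos : 0 < k := by positivity
  have key : ∀ u v : ℝ, u ∈ Ioo (0:ℝ) 1 → v ∈ Ioo (0:ℝ) 1 →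
      (y₁ (u, v) ≤ t ↔ u ^ k ≤ v) := by
    intro u v hu hv
    have hlu : 0 < -Real.log u := by
      have := Real.log_neg hu.1 hu.2; linarith
    have hlv : 0 < -Real.log v := by
      have := Real.log_neg hv.1 hv.2; linarith
    set A := Real.exp ((Real.log θ + g₁ u) / τ) with hA_def
    set B := Real.exp ((Real.log (1 - θ) + g₂ v) / τ) with hB_def
    have hA : 0 < A := Real.exp_pos _
    have hB : 0 < B := Real.exp_pos _
    have hAτ : A ^ τ = θ / (-Real.log u) := by
      rw [hA_def, Real.rpow_def_of_pos hA, Real.log_exp,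
        div_mul_cancel₀ _ (ne_of_gt hτ), hg₁, ← sub_eq_add_neg, Real.exp_sub,
        Real.exp_log hθ0, Real.exp_log hlu]
    have hBτ : B ^ τ = (1 - θ) / (-Real.log v) := by
      rw [hB_def, Real.rpow_def_of_pos hB, Real.log_exp,
        div_mul_cancel₀ _ (ne_of_gt hτ), hg₂, ← sub_eq_add_neg, Real.exp_sub,
        Real.exp_log h1θ, Real.exp_log hlv]
    have hAB : 0 < A + B := by linarith
    rw [hy₁]
    simp only [← hA_def, ← hB_def]
    rw [div_le_iff₀ hAB]
    have step1 : A ≤ t * (A + B) ↔ (1 - t) * A ≤ t * B := by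
      constructor <;> intro h <;> nlinarith
    rw [step1]
    have step2 : (1 - t) * A ≤ t * B ↔ ((1 - t) * A) ^ τ ≤ (t * B) ^ τ :=
      (Real.rpow_le_rpow_iff (by positivity) (by positivity) hτ).symm
    rw [step2, Real.mul_rpow ht1.le hA.le, Real.mul_rpow h0.le hB.le, hAτ, hBτ,
      mul_div_assoc', mul_div_assoc', div_le_div_iff₀ hlu hlv]
    rw [Real.rpow_def_of_pos hu.1, ← Real.le_log_iff_exp_le hv.1,
      hk, ← mul_div_assoc, div_le_iff₀ (by positivity)]
    constructor <;> intro h <;> nlinarith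
  -- measurability
  have hbox : MeasurableSet (Ioo (0:ℝ) 1 ×ˢ Ioo (0:ℝ) 1) :=
    measurableSet_Ioo.prod measurableSet_Ioo
  have hcont : Continuous fun x : ℝ => x ^ k :=
    continuous_iff_continuousAt.2 fun x => Real.continuousAt_rpow_const x k (Or.inr hkpos.le)
  have hT : MeasurableSet {p : ℝ × ℝ | p.1 ^ k ≤ p.2} :=
    measurableSet_le (hcont.comp continuous_fst).measurable measurable_snd
  rw [hμ, Measure.prod_restrict, Measure.restrict_apply' hbox]
  have hseteq : {p : ℝ × ℝ | y₁ p ≤ t} ∩ (Ioo (0:ℝ) 1 ×ˢ Ioo (0:ℝ) 1) =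
      {p : ℝ × ℝ | p.1 ^ k ≤ p.2} ∩ (Ioo (0:ℝ) 1 ×ˢ Ioo (0:ℝ) 1) := by
    ext ⟨u, v⟩
    simp only [mem_inter_iff, mem_setOf_eq, mem_prod]
    constructor
    · rintro ⟨h, hu, hv⟩; exact ⟨(key u v hu hv).1 h, hu, hv⟩
    · rintro ⟨h, hu, hv⟩; exact ⟨(key u v hu hv).2 h, hu, hv⟩
  rw [hseteq, Measure.prod_apply (hT.inter hbox)]
  have hsec : (fun x : ℝ => volume (Prod.mk x ⁻¹'
      ({p : ℝ × ℝ | p.1 ^ k ≤ p.2} ∩ Ioo (0:ℝ) 1 ×ˢ Ioo (0:ℝ) 1))) =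
      (Ioo (0:ℝ) 1).indicator (fun x => ENNReal.ofReal (1 - x ^ k)) := by
    funext x
    by_cases hx : x ∈ Ioo (0:ℝ) 1
    · have hxk0 : 0 < x ^ k := Real.rpow_pos_of_pos hx.1 k
      have : Prod.mk x ⁻¹' ({p : ℝ × ℝ | p.1 ^ k ≤ p.2} ∩ Ioo (0:ℝ) 1 ×ˢ Ioo (0:ℝ) 1) =
          Ico (x ^ k) 1 := by
        ext v
        simp only [mem_preimage, mem_inter_iff, mem_setOf_eq, mem_prod, mem_Ioo, mem_Ico]
        constructor
        · rintro ⟨h1, _, _, hv2⟩; exact ⟨h1, hv2⟩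
        · rintro ⟨h1, h2⟩; exact ⟨h1, hx, lt_of_lt_of_le hxk0 h1, h2⟩
      rw [this, indicator_of_mem hx, Real.volume_Ico]
    · have : Prod.mk x ⁻¹' ({p : ℝ × ℝ | p.1 ^ k ≤ p.2} ∩ Ioo (0:ℝ) 1 ×ˢ Ioo (0:ℝ) 1) =
          (∅ : Set ℝ) := by
        ext v
        simp only [mem_preimage, mem_inter_iff, mem_setOf_eq, mem_prod,
          mem_empty_iff_false, iff_false]
        rintro ⟨_, hx', _⟩
        exact hx hx'
      rw [this, measure_empty, indicator_of_notMem hx]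
  rw [hsec, lintegral_indicator measurableSet_Ioo]
  -- convert to a real integral
  have hInt : IntegrableOn (fun x : ℝ => 1 - x ^ k) (Ioo (0:ℝ) 1) volume :=
    ((continuous_const.sub hcont).integrableOn_Icc (a := (0:ℝ)) (b := 1)).mono_set
      Ioo_subset_Icc_self
  have hae : 0 ≤ᵐ[volume.restrict (Ioo (0:ℝ) 1)] fun x : ℝ => 1 - x ^ k := by
    refine (ae_restrict_iff' measurableSet_Ioo).2 (Filter.Eventually.of_forall ?_)
    intro x hx
    have : x ^ k ≤ 1 := Real.rpow_le_one hx.1.le hx.2.le hkpos.le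
    simp only [Pi.zero_apply]
    linarith
  rw [← ofReal_integral_eq_lintegral_ofReal hInt hae]
  have hint : ∫ x in Ioo (0:ℝ) 1, (1 - x ^ k) = k / (k + 1) := by
    rw [← integral_Ioc_eq_integral_Ioo, ← intervalIntegral.integral_of_le zero_le_one,
      intervalIntegral.integral_sub intervalIntegrable_const
        (intervalIntegral.intervalIntegrable_rpow (Or.inl hkpos.le)),
      intervalIntegral.integral_const, _root_.integral_rpow (Or.inl (by linarith))]
    rw [Real.one_rpow, Real.zero_rpow (by positivity)]
    have : k + 1 ≠ 0 := by positivity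
    field_simp
    simp only [sub_zero, smul_eq_mul]
    ring
  rw [hint, ENNReal.toReal_ofReal (by positivity)]
  rw [hk]
  have hD : (1 - t) ^ τ * θ ≠ 0 := by positivity
  have hden : t ^ τ * (1 - θ) + (1 - t) ^ τ * θ ≠ 0 := by positivity
  field_simp
end

section
/- Define g(t,θ) = 1 − θ − t^τ(1−θ)/(t^τ(1−θ) + (1−t)^τ θ) for t ∈ (0,1), θ ∈ (0,1), τ > 0. Then g(t,θ) + g(1−t,θ) = [((1−t)^τ − t^τ)² · θ(1−θ)(1−2θ)] / ([t^τ(1−θ) + (1−t)^τ θ]·[(1−t)^τ(1−θ) + t^τ θ]). -/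
open Real Set

/-- Symmetrization identity for the Gumbel-softmax bias integrand. -/
theorem stmt8 (τ θ t : ℝ) (hτ : 0 < τ) (hθ : θ ∈ Ioo (0:ℝ) 1) (ht : t ∈ Ioo (0:ℝ) 1)
    (g : ℝ → ℝ → ℝ)
    (hg : ∀ t' θ', g t' θ' =
      1 - θ' - t' ^ τ * (1 - θ') / (t' ^ τ * (1 - θ') + (1 - t') ^ τ * θ')) :
    g t θ + g (1 - t) θ =
      ((1 - t) ^ τ - t ^ τ) ^ 2 * (θ * (1 - θ) * (1 - 2 * θ)) /
        ((t ^ τ * (1 - θ) + (1 - t) ^ τ * θ) * ((1 - t) ^ τ * (1 - θ) + t ^ τ * θ)) := by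
  obtain ⟨ht0, ht1⟩ := ht
  obtain ⟨hθ0, hθ1⟩ := hθ
  have ha : (0:ℝ) < t ^ τ := Real.rpow_pos_of_pos ht0 τ
  have hb : (0:ℝ) < (1 - t) ^ τ := Real.rpow_pos_of_pos (by linarith) τ
  have hθ' : (0:ℝ) < 1 - θ := by linarith
  rw [hg, hg]
  have h1 : (0:ℝ) < t ^ τ * (1 - θ) + (1 - t) ^ τ * θ := by positivity
  have h2 : (0:ℝ) < (1 - t) ^ τ * (1 - θ) + t ^ τ * θ := by positivity
  have h1' := h1.ne'
  have h2' := h2.ne'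
  rw [show (1:ℝ) - (1 - t) = t by ring]
  field_simp
  ring
end

section
/- Let τ > 0, θ ∈ (0,1), and define bias(y₁) = ∫₀¹ [1 − θ − t^τ(1−θ)/(t^τ(1−θ)+(1−t)^τ θ)] dt. Then bias(y₁) > 0 when θ < 1/2, bias(y₁) = 0 when θ = 1/2, and bias(y₁) < 0 when θ > 1/2. -/
open MeasureTheory Real Set

noncomputable def hFun (τ θ t : ℝ) : ℝ :=
  1 - θ - t ^ τ * (1 - θ) / (t ^ τ * (1 - θ) + (1 - t) ^ τ * θ)

lemma Dpos {τ θ : ℝ} (hτ : 0 < τ) (hθ0 : 0 < θ) (hθ1 : θ < 1) {t : ℝ}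
    (ht0 : 0 ≤ t) (ht1 : t ≤ 1) : 0 < t ^ τ * (1 - θ) + (1 - t) ^ τ * θ := by
  rcases eq_or_lt_of_le ht0 with h | h
  · rw [← h]
    simp [Real.zero_rpow hτ.ne', Real.one_rpow]
    positivity
  · have h1 : 0 < t ^ τ := Real.rpow_pos_of_pos h τ
    have h2 : 0 ≤ (1 - t) ^ τ := Real.rpow_nonneg (by linarith) τ
    nlinarith

lemma Dpos' {τ θ : ℝ} (hτ : 0 < τ) (hθ0 : 0 < θ) (hθ1 : θ < 1) {t : ℝ}
    (ht0 : 0 ≤ t) (ht1 : t ≤ 1) : 0 < (1 - t) ^ τ * (1 - θ) + t ^ τ * θ := by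
  have := Dpos hτ (by linarith : (0:ℝ) < 1 - θ) (by linarith : (1:ℝ) - θ < 1) ht0 ht1
  calc (0:ℝ) < t ^ τ * (1 - (1 - θ)) + (1 - t) ^ τ * (1 - θ) := this
    _ = (1 - t) ^ τ * (1 - θ) + t ^ τ * θ := by ring

lemma contRpow {τ : ℝ} (hτ : 0 < τ) : Continuous fun t : ℝ => t ^ τ := by
  rw [continuous_iff_continuousAt]
  intro x
  exact Real.continuousAt_rpow_const x τ (Or.inr hτ.le)

lemma contH {τ θ : ℝ} (hτ : 0 < τ) (hθ0 : 0 < θ) (hθ1 : θ < 1) :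
    ContinuousOn (hFun τ θ) (Icc 0 1) := by
  have c1 : Continuous fun t : ℝ => t ^ τ := contRpow hτ
  have c2 : Continuous fun t : ℝ => (1 - t) ^ τ :=
    (contRpow hτ).comp (continuous_const.sub continuous_id)
  apply ContinuousOn.sub continuousOn_const
  apply ContinuousOn.div
  · exact (c1.mul continuous_const).continuousOn
  · exact ((c1.mul continuous_const).add (c2.mul continuous_const)).continuousOn
  · intro t ht
    exact (Dpos hτ hθ0 hθ1 ht.1 ht.2).ne'

lemma hIntg {τ θ : ℝ} (hτ : 0 < τ) (hθ0 : 0 < θ) (hθ1 : θ < 1) :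
    IntervalIntegrable (hFun τ θ) volume 0 1 := by
  apply ContinuousOn.intervalIntegrable
  rw [uIcc_of_le zero_le_one]
  exact contH hτ hθ0 hθ1

lemma hIntgFlip {τ θ : ℝ} (hτ : 0 < τ) (hθ0 : 0 < θ) (hθ1 : θ < 1) :
    IntervalIntegrable (fun t => hFun τ θ (1 - t)) volume 0 1 := by
  apply ContinuousOn.intervalIntegrable
  rw [uIcc_of_le zero_le_one]
  apply (contH hτ hθ0 hθ1).comp (continuous_const.sub continuous_id).continuousOn
  intro t ht
  exact ⟨by simpa using ht.2, by simpa using ht.1⟩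

lemma flip_pt {τ θ : ℝ} (hτ : 0 < τ) (hθ0 : 0 < θ) (hθ1 : θ < 1) {t : ℝ}
    (ht0 : 0 ≤ t) (ht1 : t ≤ 1) :
    hFun τ θ (1 - t) = -(hFun τ (1 - θ) t) := by
  simp only [hFun]
  have h2 : (1 : ℝ) - (1 - t) = t := by ring
  rw [h2]
  set a := t ^ τ with ha
  set b := (1 - t) ^ τ with hb
  have hD2 : b * (1 - θ) + a * θ ≠ 0 := (Dpos' hτ hθ0 hθ1 ht0 ht1).ne'
  have hrw : a * (1 - (1 - θ)) + b * (1 - θ) = b * (1 - θ) + a * θ := by ring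
  rw [hrw]
  have e : b * (1 - θ) / (b * (1 - θ) + a * θ) + a * (1 - (1 - θ)) / (b * (1 - θ) + a * θ) = 1 := by
    rw [← add_div, div_eq_one_iff_eq hD2]; ring
  linear_combination (-1 : ℝ) * e

lemma flip_int {τ θ : ℝ} :
    ∫ x in (0:ℝ)..1, hFun τ θ (1 - x) = ∫ x in (0:ℝ)..1, hFun τ θ x := by
  have := intervalIntegral.integral_comp_sub_left (a := (0:ℝ)) (b := 1) (hFun τ θ) 1
  simpa using this

lemma antisym {τ θ : ℝ} (hτ : 0 < τ) (hθ0 : 0 < θ) (hθ1 : θ < 1) :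
    ∫ t in (0:ℝ)..1, hFun τ θ t = -∫ t in (0:ℝ)..1, hFun τ (1 - θ) t := by
  rw [← flip_int, ← intervalIntegral.integral_neg]
  apply intervalIntegral.integral_congr
  intro t ht
  rw [uIcc_of_le zero_le_one] at ht
  exact flip_pt hτ hθ0 hθ1 ht.1 ht.2

lemma pairing {τ θ : ℝ} (hτ : 0 < τ) (hθ0 : 0 < θ) (hθ1 : θ < 1) {t : ℝ}
    (ht0 : 0 ≤ t) (ht1 : t ≤ 1) :
    hFun τ θ t + hFun τ θ (1 - t) =
      θ * (1 - θ) * (1 - 2 * θ) * ((1 - t) ^ τ - t ^ τ) ^ 2 /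
        ((t ^ τ * (1 - θ) + (1 - t) ^ τ * θ) * ((1 - t) ^ τ * (1 - θ) + t ^ τ * θ)) := by
  simp only [hFun]
  have h2 : (1 : ℝ) - (1 - t) = t := by ring
  rw [h2]
  set a := t ^ τ with ha
  set b := (1 - t) ^ τ with hb
  have hD1 : a * (1 - θ) + b * θ ≠ 0 := (Dpos hτ hθ0 hθ1 ht0 ht1).ne'
  have hD2 : b * (1 - θ) + a * θ ≠ 0 := (Dpos' hτ hθ0 hθ1 ht0 ht1).ne'
  rw [eq_div_iff (mul_ne_zero hD1 hD2)]
  have e1 : a * (1 - θ) / (a * (1 - θ) + b * θ) * (a * (1 - θ) + b * θ) = a * (1 - θ) :=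
    div_mul_cancel₀ _ hD1
  have e2 : b * (1 - θ) / (b * (1 - θ) + a * θ) * (b * (1 - θ) + a * θ) = b * (1 - θ) :=
    div_mul_cancel₀ _ hD2
  linear_combination (-(b * (1 - θ) + a * θ)) * e1 + (-(a * (1 - θ) + b * θ)) * e2

lemma gCont {τ θ : ℝ} (hτ : 0 < τ) (hθ0 : 0 < θ) (hθ1 : θ < 1) :
    ContinuousOn (fun t => θ * (1 - θ) * (1 - 2 * θ) * ((1 - t) ^ τ - t ^ τ) ^ 2 /
        ((t ^ τ * (1 - θ) + (1 - t) ^ τ * θ) * ((1 - t) ^ τ * (1 - θ) + t ^ τ * θ)))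
      (Icc 0 1) := by
  have c1 : Continuous fun t : ℝ => t ^ τ := contRpow hτ
  have c2 : Continuous fun t : ℝ => (1 - t) ^ τ :=
    (contRpow hτ).comp (continuous_const.sub continuous_id)
  apply ContinuousOn.div
  · exact (continuous_const.mul (((c2.sub c1).pow 2))).continuousOn
  · exact (((c1.mul continuous_const).add (c2.mul continuous_const)).mul
      ((c2.mul continuous_const).add (c1.mul continuous_const))).continuousOn
  · intro t ht
    exact (mul_pos (Dpos hτ hθ0 hθ1 ht.1 ht.2) (Dpos' hτ hθ0 hθ1 ht.1 ht.2)).ne'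

lemma gPos {τ θ : ℝ} (hτ : 0 < τ) (hθ0 : 0 < θ) (hθ : θ < 1 / 2) {t : ℝ}
    (ht0 : 0 < t) (ht1 : t < 1) (hne : t ≠ 1 / 2) :
    0 < θ * (1 - θ) * (1 - 2 * θ) * ((1 - t) ^ τ - t ^ τ) ^ 2 /
        ((t ^ τ * (1 - θ) + (1 - t) ^ τ * θ) * ((1 - t) ^ τ * (1 - θ) + t ^ τ * θ)) := by
  have hθ1 : θ < 1 := by linarith
  have hD1 := Dpos hτ hθ0 hθ1 ht0.le ht1.le
  have hD2 := Dpos' hτ hθ0 hθ1 ht0.le ht1.le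
  have hba : (1 - t) ^ τ - t ^ τ ≠ 0 := by
    rcases lt_or_gt_of_ne hne with h | h
    · have : t ^ τ < (1 - t) ^ τ := Real.rpow_lt_rpow ht0.le (by linarith) hτ
      linarith
    · have : (1 - t) ^ τ < t ^ τ := Real.rpow_lt_rpow (by linarith) (by linarith) hτ
      linarith
  have hc : 0 < θ * (1 - θ) * (1 - 2 * θ) := mul_pos (mul_pos hθ0 (by linarith)) (by linarith)
  have hsq : 0 < ((1 - t) ^ τ - t ^ τ) ^ 2 := by positivity
  exact div_pos (mul_pos hc hsq) (mul_pos hD1 hD2)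

lemma posB {τ θ : ℝ} (hτ : 0 < τ) (hθ0 : 0 < θ) (hθ : θ < 1 / 2) :
    0 < ∫ t in (0:ℝ)..1, hFun τ θ t := by
  have hθ1 : θ < 1 := by linarith
  set g : ℝ → ℝ := fun t => θ * (1 - θ) * (1 - 2 * θ) * ((1 - t) ^ τ - t ^ τ) ^ 2 /
        ((t ^ τ * (1 - θ) + (1 - t) ^ τ * θ) * ((1 - t) ^ τ * (1 - θ) + t ^ τ * θ)) with hg
  have hgInt : ∀ a b : ℝ, 0 ≤ a → b ≤ 1 → a ≤ b → IntervalIntegrable g volume a b := by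
    intro a b ha hb hab
    apply ContinuousOn.intervalIntegrable
    rw [uIcc_of_le hab]
    exact (gCont hτ hθ0 hθ1).mono (Icc_subset_Icc ha hb)
  have h2B : (2:ℝ) * ∫ t in (0:ℝ)..1, hFun τ θ t = ∫ t in (0:ℝ)..1, g t := by
    have hadd := intervalIntegral.integral_add (hIntg hτ hθ0 hθ1) (hIntgFlip hτ hθ0 hθ1)
    rw [two_mul]
    nth_rewrite 2 [← flip_int]
    rw [← hadd]
    apply intervalIntegral.integral_congr
    intro t ht
    rw [uIcc_of_le zero_le_one] at ht
    exact pairing hτ hθ0 hθ1 ht.1 ht.2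
  have hpos1 : 0 < ∫ t in (0:ℝ)..(1/2), g t := by
    apply intervalIntegral.intervalIntegral_pos_of_pos_on
      (hgInt 0 (1/2) le_rfl (by norm_num) (by norm_num))
    · intro x hx
      exact gPos hτ hθ0 hθ hx.1 (by linarith [hx.2]) (ne_of_lt hx.2)
    · norm_num
  have hpos2 : 0 < ∫ t in (1/2:ℝ)..1, g t := by
    apply intervalIntegral.intervalIntegral_pos_of_pos_on
      (hgInt (1/2) 1 (by norm_num) le_rfl (by norm_num))
    · intro x hx
      exact gPos hτ hθ0 hθ (by linarith [hx.1]) hx.2 (ne_of_gt hx.1)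
    · norm_num
  have hsplit := intervalIntegral.integral_add_adjacent_intervals
    (hgInt 0 (1/2) le_rfl (by norm_num) (by norm_num))
    (hgInt (1/2) 1 (by norm_num) le_rfl (by norm_num))
  linarith

/-- Sign of the bias of the Gumbel-softmax relaxed Bernoulli sample. -/
theorem stmt9 (τ θ : ℝ) (hτ : 0 < τ) (hθ : θ ∈ Ioo (0:ℝ) 1)
    (bias : ℝ)
    (hbias : bias = ∫ t in Set.Ioo (0:ℝ) 1,
      (1 - θ - t ^ τ * (1 - θ) / (t ^ τ * (1 - θ) + (1 - t) ^ τ * θ))) :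
    (θ < 1 / 2 → 0 < bias) ∧ (θ = 1 / 2 → bias = 0) ∧ (1 / 2 < θ → bias < 0) := by
  obtain ⟨hθ0, hθ1⟩ := hθ
  have hbias' : bias = ∫ t in (0:ℝ)..1, hFun τ θ t := by
    rw [hbias, intervalIntegral.integral_of_le zero_le_one,
      MeasureTheory.integral_Ioc_eq_integral_Ioo]
    rfl
  refine ⟨fun h => ?_, fun h => ?_, fun h => ?_⟩
  · rw [hbias']
    exact posB hτ hθ0 h
  · subst h
    have ha := antisym hτ hθ0 hθ1
    norm_num at ha
    rw [hbias']
    norm_num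
    linarith
  · rw [hbias', antisym hτ hθ0 hθ1]
    have := posB hτ (by linarith : (0:ℝ) < 1 - θ) (by linarith : 1 - θ < 1 / 2)
    linarith
end

section
/- Let F be a CDF whose density F' is an even function that is increasing on (−∞, 0). Fix s < 0 and a ≠ 0. Then F(s+a) + F(s−a) > 2F(s). -/
open Real Set

/-- Symmetric unimodal CDF: strict convexity inequality on the negative half-line. -/
theorem stmt10 (F f : ℝ → ℝ)
    (hderiv : ∀ x, HasDerivAt F (f x) x)
    (heven : ∀ x, f (-x) = f x)
    (hmono : StrictMonoOn f (Iio (0:ℝ)))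
    (s a : ℝ) (hs : s < 0) (ha : a ≠ 0) :
    2 * F s < F (s + a) + F (s - a) := by
  have hcont : Continuous F := by
    have : Differentiable ℝ F := fun x => (hderiv x).differentiableAt
    exact this.continuous
  -- Step 1: f x ≤ f 0 for all x < 0
  have hf0 : ∀ x < (0:ℝ), f x ≤ f 0 := by
    intro x hx
    have htend : Filter.Tendsto (slope F 0) (nhdsWithin 0 {(0:ℝ)}ᶜ) (nhds (f 0)) :=
      hasDerivAt_iff_tendsto_slope.mp (hderiv 0)
    have htend' : Filter.Tendsto (slope F 0) (nhdsWithin 0 (Iio 0)) (nhds (f 0)) :=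
      htend.mono_left (nhdsWithin_mono _ (fun y hy => ne_of_lt hy))
    refine ge_of_tendsto htend' ?_
    have hgx : ∀ᶠ y in nhdsWithin (0:ℝ) (Iio 0), x < y :=
      Filter.Eventually.filter_mono nhdsWithin_le_nhds (eventually_gt_nhds hx)
    filter_upwards [self_mem_nhdsWithin, hgx] with y hy0 hxy
    have hy0' : y < 0 := hy0
    obtain ⟨c, hc, hceq⟩ := exists_hasDerivAt_eq_slope F f hy0' (hcont.continuousOn)
      (fun z _ => hderiv z)
    have hxc : f x < f c := hmono hx (hc.2 : c < 0) (lt_trans hxy hc.1)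
    have : slope F 0 y = f c := by
      rw [slope_def_field, hceq]
      rw [← neg_sub (F 0) (F y), ← neg_sub (0:ℝ) y, neg_div_neg_eq]
    rw [this]
    exact hxc.le
  -- Step 2: monotone on Iic 0
  have hmono' : MonotoneOn f (Iic (0:ℝ)) := by
    intro x hx y hy hxy
    rcases eq_or_lt_of_le hxy with rfl | hxy'
    · exact le_refl _
    rcases eq_or_lt_of_le (mem_Iic.mp hy) with rfl | hy'
    · exact hf0 x hxy'
    · exact (hmono (mem_Iio.mpr (lt_of_le_of_lt hxy hy')) (mem_Iio.mpr hy') hxy').le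
  -- Step 3: antitone on Ici 0
  have hanti : AntitoneOn f (Ici (0:ℝ)) := by
    intro x hx y hy hxy
    have := hmono' (show -y ≤ (0:ℝ) by simpa using (hy : (0:ℝ) ≤ y))
      (show -x ≤ (0:ℝ) by simpa using (hx : (0:ℝ) ≤ x)) (by linarith)
    simpa [heven] using this
  -- Step 4: interval integrability everywhere
  have hint0 : ∀ u : ℝ, IntervalIntegrable f MeasureTheory.volume 0 u := by
    intro u
    rcases le_total u 0 with hu | hu
    · exact (hmono'.mono (by rw [uIcc_of_ge hu]; exact Icc_subset_Iic_self)).intervalIntegrable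
    · exact (hanti.mono (by rw [uIcc_of_le hu]; exact Icc_subset_Ici_self)).intervalIntegrable
  have hint : ∀ u v : ℝ, IntervalIntegrable f MeasureTheory.volume u v :=
    fun u v => (hint0 u).symm.trans (hint0 v)
  -- pointwise comparison
  have hgpos : ∀ t : ℝ, 0 < t → t < -s → f (s - t) < f (s + t) := by
    intro t ht hts
    exact hmono (show s - t < 0 by linarith) (show s + t < 0 by linarith) (by linarith)
  have hgnn : ∀ t : ℝ, 0 < t → f (s - t) ≤ f (s + t) := by
    intro t ht
    rcases lt_trichotomy (s + t) 0 with h | h | h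
    · exact (hmono (show s - t < 0 by linarith) h (by linarith)).le
    · rw [h]; exact hf0 _ (by linarith)
    · have : f (s - t) < f (-(s + t)) :=
        hmono (show s - t < 0 by linarith) (show -(s + t) < 0 by linarith)
          (show s - t < -(s + t) by linarith)
      rw [heven] at this
      exact this.le
  -- key claim for positive b
  have key : ∀ b : ℝ, 0 < b → 2 * F s < F (s + b) + F (s - b) := by
    intro b hb
    have ftc1 : ∫ x in s..(s + b), f x = F (s + b) - F s :=
      intervalIntegral.integral_eq_sub_of_hasDerivAt (fun x _ => hderiv x) (hint _ _)
    have ftc2 : ∫ x in (s - b)..s, f x = F s - F (s - b) :=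
      intervalIntegral.integral_eq_sub_of_hasDerivAt (fun x _ => hderiv x) (hint _ _)
    have hcompP : ∫ t in (0:ℝ)..b, f (s + t) = ∫ x in s..(s + b), f x := by
      have := intervalIntegral.integral_comp_add_left (a := (0:ℝ)) (b := b) f s
      simpa using this
    have hcompM : ∫ t in (0:ℝ)..b, f (s - t) = ∫ x in (s - b)..s, f x := by
      have := intervalIntegral.integral_comp_sub_left (a := (0:ℝ)) (b := b) f s
      simpa using this
    -- integrability of the composed functions on [0,b]
    have hiP : IntervalIntegrable (fun t => f (s + t)) MeasureTheory.volume 0 b := by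
      have := (hint s (s + b)).comp_add_left s
      simpa using this
    have hiM : IntervalIntegrable (fun t => f (s - t)) MeasureTheory.volume 0 b := by
      have := ((hint (s - b) s).comp_sub_left s).symm
      simpa using this
    -- the difference has positive integral
    set m : ℝ := min b (-s) with hm
    have hm0 : 0 < m := lt_min hb (by linarith)
    have hmb : m ≤ b := min_le_left _ _
    have hdiffint : ∀ u v : ℝ, IntervalIntegrable (fun t => f (s + t) - f (s - t))
        MeasureTheory.volume u v := by
      intro u v
      have h1 := (hint (s + u) (s + v)).comp_add_left s
      have h2 := (hint (s - v) (s - u)).comp_sub_left s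
      simp only [add_sub_cancel_left, sub_sub_cancel] at h1 h2
      exact h1.sub h2.symm
    have hpos1 : 0 < ∫ t in (0:ℝ)..m, (f (s + t) - f (s - t)) := by
      apply intervalIntegral.intervalIntegral_pos_of_pos_on (hdiffint 0 m) _ hm0
      intro t ht
      have := hgpos t ht.1 (lt_of_lt_of_le ht.2 (min_le_right _ _))
      linarith
    have hpos2 : 0 ≤ ∫ t in m..b, (f (s + t) - f (s - t)) := by
      apply intervalIntegral.integral_nonneg hmb
      intro t ht
      have := hgnn t (lt_of_lt_of_le hm0 ht.1)
      linarith
    have hsum : (∫ t in (0:ℝ)..m, (f (s + t) - f (s - t)))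
        + ∫ t in m..b, (f (s + t) - f (s - t))
        = ∫ t in (0:ℝ)..b, (f (s + t) - f (s - t)) :=
      intervalIntegral.integral_add_adjacent_intervals (hdiffint 0 m) (hdiffint m b)
    have hposb : 0 < ∫ t in (0:ℝ)..b, (f (s + t) - f (s - t)) := by
      rw [← hsum]; linarith
    have hsplit : ∫ t in (0:ℝ)..b, (f (s + t) - f (s - t))
        = (∫ t in (0:ℝ)..b, f (s + t)) - ∫ t in (0:ℝ)..b, f (s - t) :=
      intervalIntegral.integral_sub hiP hiM
    rw [hsplit, hcompP, hcompM, ftc1, ftc2] at hposb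
    linarith
  rcases lt_or_gt_of_ne ha with h | h
  · have hk := key (-a) (by linarith)
    rw [sub_neg_eq_add, ← sub_eq_add_neg] at hk
    linarith
  · exact key a h
end

section
/- Let F be a CDF whose density F' is even and increasing on (−∞,0), let τ > 0, θ ∈ (0,1), and define bias(z) = ∫₀¹ F(F⁻¹(θ) + τ·log(1/t − 1)) dt − θ. Then bias(z) > 0 when θ < 1/2, bias(z) = 0 when θ = 1/2, and bias(z) < 0 when θ > 1/2. -/
open MeasureTheory Real Set Filter ENNReal

lemma aux_sum_one {F f : ℝ → ℝ} (hderiv : ∀ x, HasDerivAt F (f x) x)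
    (heven : ∀ x, f (-x) = f x)
    (hbot : Tendsto F atBot (nhds 0)) (htop : Tendsto F atTop (nhds 1)) :
    ∀ x, F x + F (-x) = 1 := by
  set H : ℝ → ℝ := fun x => F x + F (-x) with hH
  have hd : ∀ x, HasDerivAt H 0 x := by
    intro x
    have h2 : HasDerivAt (fun y : ℝ => F (-y)) (f (-x) * (-1)) x :=
      (hderiv (-x)).comp x (hasDerivAt_neg x)
    have this : HasDerivAt H (f x + f (-x) * (-1)) x := (hderiv x).add h2
    simpa [heven x] using this
  have hdiff : Differentiable ℝ H := fun x => (hd x).differentiableAt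
  have hconst : ∀ x, H x = H 0 :=
    fun x => is_const_of_deriv_eq_zero hdiff (fun y => (hd y).deriv) x 0
  have htend : Tendsto H atTop (nhds (1 + 0)) :=
    htop.add (hbot.comp tendsto_neg_atTop_atBot)
  have htend' : Tendsto H atTop (nhds (H 0)) := by
    have : H = fun _ => H 0 := funext hconst
    rw [this]; exact tendsto_const_nhds
  have hval : H 0 = 1 + 0 := tendsto_nhds_unique htend' htend
  intro x
  have hx : F x + F (-x) = H 0 := hconst x
  rw [hx, hval]; ring

lemma aux_key {F f : ℝ → ℝ} (hderiv : ∀ x, HasDerivAt F (f x) x)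
    (heven : ∀ x, f (-x) = f x)
    (hmono : StrictMonoOn f (Iio (0:ℝ)))
    {a s : ℝ} (ha : a < 0) (hs : s ≠ 0) :
    2 * F a < F (a + s) + F (a - s) := by
  set g : ℝ → ℝ := fun u => F (a + u) + F (a - u) with hg
  have hgd : ∀ u, HasDerivAt g (f (a + u) - f (a - u)) u := by
    intro u
    have h1 : HasDerivAt (fun u : ℝ => F (a + u)) (f (a + u) * 1) u :=
      (hderiv (a + u)).comp u ((hasDerivAt_id u).const_add a)
    have h2 : HasDerivAt (fun u : ℝ => F (a - u)) (f (a - u) * (-1)) u :=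
      (hderiv (a - u)).comp u ((hasDerivAt_id u).const_sub a)
    have this : HasDerivAt g (f (a + u) * 1 + f (a - u) * (-1)) u := h1.add h2
    simpa [mul_one, mul_neg_one, sub_eq_add_neg] using this
  have hpos : ∀ u : ℝ, 0 < u → u ≠ -a → 0 < deriv g u := by
    intro u hu hne
    rw [(hgd u).deriv]
    rcases lt_or_gt_of_ne hne with h | h
    · have h1 : a - u < a + u := by linarith
      have := hmono (mem_Iio.2 (by linarith : a - u < 0))
        (mem_Iio.2 (by linarith : a + u < 0)) h1
      linarith
    · have h1 : a - u < -(a + u) := by linarith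
      have := hmono (mem_Iio.2 (by linarith : a - u < 0))
        (mem_Iio.2 (by linarith : -(a + u) < 0)) h1
      have he : f (-(a + u)) = f (a + u) := heven _
      linarith
  have hcont : Continuous g := by
    rw [continuous_iff_continuousAt]; exact fun u => (hgd u).continuousAt
  have hm1 : StrictMonoOn g (Icc 0 (-a)) := by
    apply strictMonoOn_of_deriv_pos (convex_Icc _ _) hcont.continuousOn
    intro x hx
    rw [interior_Icc] at hx
    exact hpos x hx.1 (ne_of_lt hx.2)
  have hm2 : StrictMonoOn g (Ici (-a)) := by
    apply strictMonoOn_of_deriv_pos (convex_Ici _) hcont.continuousOn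
    intro x hx
    rw [interior_Ici] at hx
    have hx' : -a < x := hx
    exact hpos x (by linarith) hx'.ne'
  have key : ∀ u : ℝ, 0 < u → g 0 < g u := by
    intro u hu
    rcases le_or_gt u (-a) with h | h
    · exact hm1 ⟨le_refl 0, by linarith⟩ ⟨hu.le, h⟩ hu
    · have h0 : g 0 < g (-a) := hm1 ⟨le_refl 0, by linarith⟩ ⟨by linarith, le_refl _⟩ (by linarith)
      have h1 : g (-a) < g u := hm2 (le_refl (-a)) h.le h
      linarith
  have hg0 : g 0 = 2 * F a := by simp [hg]; ring
  have hgs : g s = F (a + s) + F (a - s) := rfl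
  rcases hs.lt_or_gt with h | h
  · have hk := key (-s) (by linarith)
    have hsym : g (-s) = g s := by
      simp only [hg]
      rw [sub_neg_eq_add, ← sub_eq_add_neg, add_comm]
    rw [hsym, hg0, hgs] at hk; exact hk
  · have hk := key s h
    rw [hg0, hgs] at hk; exact hk

lemma aux_key' {F f : ℝ → ℝ} (hderiv : ∀ x, HasDerivAt F (f x) x)
    (heven : ∀ x, f (-x) = f x)
    (hmono : StrictMonoOn f (Iio (0:ℝ)))
    (hbot : Tendsto F atBot (nhds 0)) (htop : Tendsto F atTop (nhds 1))
    {a s : ℝ} (ha : 0 < a) (hs : s ≠ 0) :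
    F (a + s) + F (a - s) < 2 * F a := by
  have h := aux_key hderiv heven hmono (a := -a) (s := s) (by linarith) hs
  have e1 := aux_sum_one hderiv heven hbot htop (a + s)
  have e2 := aux_sum_one hderiv heven hbot htop (a - s)
  have e3 := aux_sum_one hderiv heven hbot htop a
  have r1 : (-a : ℝ) + s = -(a - s) := by ring
  have r2 : (-a : ℝ) - s = -(a + s) := by ring
  rw [r1, r2] at h
  linarith

lemma aux_int_pos {D : ℝ → ℝ} (hID : IntegrableOn D (Ioo (0:ℝ) 1))
    (hpos : ∀ t ∈ Ioo (0:ℝ) 1, t ≠ 1/2 → 0 < D t)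
    (hnn : ∀ t ∈ Ioo (0:ℝ) 1, 0 ≤ D t) :
    0 < ∫ t in Ioo (0:ℝ) 1, D t := by
  have hae : 0 ≤ᵐ[volume.restrict (Ioo (0:ℝ) 1)] D := by
    filter_upwards [ae_restrict_mem measurableSet_Ioo] with t ht using hnn t ht
  rw [setIntegral_pos_iff_support_of_nonneg_ae hae hID]
  have hsub : Ioo (0:ℝ) 1 \ {1/2} ⊆ Function.support D ∩ Ioo 0 1 := by
      intro t ht
      obtain ⟨ht1, ht2⟩ := ht
      exact ⟨ne_of_gt (hpos t ht1 (by simpa using ht2)), ht1⟩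
  calc (0:ℝ≥0∞) < volume (Ioo (0:ℝ) 1 \ {1/2}) := by
        rw [measure_diff_null (measure_singleton _)]
        simp [Real.volume_Ioo]
    _ ≤ _ := measure_mono hsub

lemma aux_refl (φ : ℝ → ℝ) :
    ∫ t in Ioo (0:ℝ) 1, φ (1 - t) = ∫ t in Ioo (0:ℝ) 1, φ t := by
  have conv : ∀ ψ : ℝ → ℝ, ∫ t in Ioo (0:ℝ) 1, ψ t = ∫ t in (0:ℝ)..1, ψ t := by
    intro ψ
    rw [intervalIntegral.integral_of_le zero_le_one, integral_Ioc_eq_integral_Ioo]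
  rw [conv (fun t => φ (1 - t)), conv φ]
  simpa using intervalIntegral.integral_comp_sub_left φ 1

/-- Sign of the bias of the ICDF-reparameterized relaxed Bernoulli sample. -/
theorem stmt11 (F Finv f : ℝ → ℝ)
    (hderiv : ∀ x, HasDerivAt F (f x) x)
    (heven : ∀ x, f (-x) = f x)
    (hmono : StrictMonoOn f (Iio (0:ℝ)))
    (hbot : Tendsto F atBot (nhds 0)) (htop : Tendsto F atTop (nhds 1))
    (hFmono : StrictMono F)
    (hFinv : ∀ p ∈ Ioo (0:ℝ) 1, F (Finv p) = p)
    (τ θ : ℝ) (hτ : 0 < τ) (hθ : θ ∈ Ioo (0:ℝ) 1)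
    (bias : ℝ)
    (hbias : bias = (∫ t in Set.Ioo (0:ℝ) 1,
      F (Finv θ + τ * Real.log (1 / t - 1))) - θ) :
    (θ < 1 / 2 → 0 < bias) ∧ (θ = 1 / 2 → bias = 0) ∧ (1 / 2 < θ → bias < 0) := by
  set a := Finv θ with ha
  have haθ : F a = θ := hFinv θ hθ
  have hsum := aux_sum_one hderiv heven hbot htop
  have hF0 : F 0 = 1/2 := by have := hsum 0; simp at this; linarith
  have hFc : Continuous F := continuous_iff_continuousAt.2 fun x => (hderiv x).continuousAt
  have hFnn : ∀ x, 0 ≤ F x := fun x => hFmono.monotone.le_of_tendsto hbot x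
  have hFle : ∀ x, F x ≤ 1 := fun x => hFmono.monotone.ge_of_tendsto htop x
  -- integrability of the relevant functions
  have hconst1 : IntegrableOn (fun _ : ℝ => (1:ℝ)) (Ioo (0:ℝ) 1) :=
    integrableOn_const (by simp [Real.volume_Ioo])
  have hint : ∀ φ : ℝ → ℝ, Measurable φ →
      IntegrableOn (fun t => F (φ t)) (Ioo (0:ℝ) 1) := by
    intro φ hφ
    apply Integrable.mono' hconst1 ((hFc.measurable.comp hφ).aestronglyMeasurable)
    filter_upwards with t
    simp only [Function.comp_apply]
    rw [Real.norm_eq_abs, abs_le]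
    exact ⟨by linarith [hFnn (φ t)], hFle (φ t)⟩
  have hmeasL : Measurable (fun t : ℝ => a + τ * Real.log (1 / t - 1)) :=
    measurable_const.add (measurable_const.mul (Real.measurable_log.comp
      ((measurable_const.div measurable_id).sub measurable_const)))
  have hmeasL' : Measurable (fun t : ℝ => a + τ * Real.log (1 / (1 - t) - 1)) :=
    measurable_const.add (measurable_const.mul (Real.measurable_log.comp
      ((measurable_const.div (measurable_const.sub measurable_id)).sub measurable_const)))
  set G : ℝ → ℝ := fun t => F (a + τ * Real.log (1 / t - 1)) with hG
  have hIG : IntegrableOn G (Ioo (0:ℝ) 1) := hint _ hmeasL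
  have hIG' : IntegrableOn (fun t => G (1 - t)) (Ioo (0:ℝ) 1) := hint _ hmeasL'
  have hrefl : ∫ t in Ioo (0:ℝ) 1, G (1 - t) = ∫ t in Ioo (0:ℝ) 1, G t := aux_refl G
  -- log reflection identity
  have hLrefl : ∀ t ∈ Ioo (0:ℝ) 1, Real.log (1/(1-t) - 1) = - Real.log (1/t - 1) := by
    intro t ht
    obtain ⟨h0, h1⟩ := ht
    have ht0 : t ≠ 0 := ne_of_gt h0
    have ht1 : (1:ℝ) - t ≠ 0 := by intro h; linarith [sub_eq_zero.1 h]
    have e1 : 1/(1-t) - 1 = t / (1-t) := by field_simp; ring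
    have e2 : 1/t - 1 = (1-t)/t := by field_simp
    rw [e1, e2, Real.log_div ht0 ht1, Real.log_div ht1 ht0]; ring
  have hLzero : ∀ t ∈ Ioo (0:ℝ) 1, t ≠ 1/2 → Real.log (1/t - 1) ≠ 0 := by
    intro t ht hne hlog
    obtain ⟨h0, h1⟩ := ht
    have harg : 0 < 1/t - 1 := sub_pos.2 (one_lt_one_div h0 h1)
    have ht0 : t ≠ 0 := ne_of_gt h0
    rcases Real.log_eq_zero.1 hlog with h | h | h
    · linarith
    · apply hne; field_simp at h; linarith
    · linarith
  -- the paired integrand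
  set D : ℝ → ℝ := fun t => G t + G (1 - t) - 2*θ with hD
  have hconst2 : IntegrableOn (fun _ : ℝ => 2*θ) (Ioo (0:ℝ) 1) :=
    integrableOn_const (by simp [Real.volume_Ioo])
  have h1 : IntegrableOn (fun t => G t + G (1 - t)) (Ioo (0:ℝ) 1) := hIG.add hIG'
  have hID : IntegrableOn D (Ioo (0:ℝ) 1) := h1.sub hconst2
  have hDint : ∫ t in Ioo (0:ℝ) 1, D t = 2 * bias := by
    have e1 : ∫ t in Ioo (0:ℝ) 1, D t
        = (∫ t in Ioo (0:ℝ) 1, (G t + G (1 - t))) - ∫ _t in Ioo (0:ℝ) 1, (2*θ:ℝ) :=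
      integral_sub h1 hconst2
    have e2 : ∫ t in Ioo (0:ℝ) 1, (G t + G (1 - t))
        = (∫ t in Ioo (0:ℝ) 1, G t) + ∫ t in Ioo (0:ℝ) 1, G (1 - t) :=
      integral_add hIG hIG'
    have e3 : ∫ _t in Ioo (0:ℝ) 1, (2*θ:ℝ) = 2*θ := by
      rw [setIntegral_const]
      simp [Real.volume_Ioo]
    rw [e1, e2, hrefl, e3, hbias]; ring
  have hDval : ∀ t ∈ Ioo (0:ℝ) 1,
      D t = F (a + τ * Real.log (1/t - 1)) + F (a - τ * Real.log (1/t - 1)) - 2 * F a := by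
    intro t ht
    simp only [hD, hG]
    rw [hLrefl t ht, haθ]
    ring_nf
  refine ⟨?_, ?_, ?_⟩
  · intro h
    have ha0 : a < 0 := by
      have : F a < F 0 := by rw [haθ, hF0]; exact h
      exact hFmono.lt_iff_lt.1 this
    have hDpos : ∀ t ∈ Ioo (0:ℝ) 1, t ≠ 1/2 → 0 < D t := by
      intro t ht hne
      rw [hDval t ht]
      have hs : τ * Real.log (1/t - 1) ≠ 0 := mul_ne_zero (ne_of_gt hτ) (hLzero t ht hne)
      linarith [aux_key hderiv heven hmono ha0 hs]
    have hDnn : ∀ t ∈ Ioo (0:ℝ) 1, 0 ≤ D t := by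
      intro t ht
      by_cases hne : t = 1/2
      · subst hne
        rw [hDval _ ht]
        norm_num
        linarith
      · exact (hDpos t ht hne).le
    have hp := aux_int_pos hID hDpos hDnn
    rw [hDint] at hp; linarith
  · intro h
    have ha0 : a = 0 := hFmono.injective (by rw [haθ, hF0, h])
    have hz : ∫ t in Ioo (0:ℝ) 1, D t = 0 := by
      have heq : EqOn D (fun _ => (0:ℝ)) (Ioo (0:ℝ) 1) := by
        intro t ht
        have hsum' := hsum (τ * Real.log (1/t - 1))
        have h2 := hDval t ht
        rw [ha0] at h2
        simp only [zero_add, zero_sub] at h2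
        rw [hF0] at h2
        simp only [h2]
        linarith
      rw [setIntegral_congr_fun measurableSet_Ioo heq]
      simp
    rw [hDint] at hz; linarith
  · intro h
    have ha0 : 0 < a := by
      have : F 0 < F a := by rw [haθ, hF0]; exact h
      exact hFmono.lt_iff_lt.1 this
    have hDneg : ∀ t ∈ Ioo (0:ℝ) 1, t ≠ 1/2 → 0 < -D t := by
      intro t ht hne
      rw [hDval t ht]
      have hs : τ * Real.log (1/t - 1) ≠ 0 := mul_ne_zero (ne_of_gt hτ) (hLzero t ht hne)
      linarith [aux_key' hderiv heven hmono hbot htop ha0 hs]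
    have hDnn : ∀ t ∈ Ioo (0:ℝ) 1, 0 ≤ -D t := by
      intro t ht
      by_cases hne : t = 1/2
      · subst hne
        rw [hDval _ ht]
        norm_num
        linarith
      · exact (hDneg t ht hne).le
    have hIDn : IntegrableOn (fun t => -D t) (Ioo (0:ℝ) 1) := hID.neg
    have hp := aux_int_pos hIDn hDneg hDnn
    rw [integral_neg, hDint] at hp
    linarith
end

section
/- Let K₀ be a square matrix with strictly positive entries, and define the Sinkhorn iteration r₀ = c₀ = 𝟙, c_{j+1} = 𝟙 ⊘ (K₀ᵀ r_j), r_{j+1} = 𝟙 ⊘ (K₀ c_j), where ⊘ is entrywise division. Then each matrix K_j = diag(r_j)·K₀·diag(c_j) has strictly positive entries, and if K_j converges to a limit K∞, then K∞ is doubly stochastic. -/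
open Matrix Finset Filter

lemma aux_growth19 (f : ℕ → ℝ) (hf : ∀ j, 0 < f j) {S : ℝ} (hS1 : S < 1)
    (h : Tendsto (fun j => f j / f (j + 1)) atTop (nhds S)) :
    Tendsto f atTop atTop := by
  have hS0 : 0 ≤ S := ge_of_tendsto' h (fun j => (div_pos (hf j) (hf (j + 1))).le)
  set q : ℝ := (S + 1) / 2 with hqdef
  have hq0 : 0 < q := by simp only [hqdef]; linarith
  have hq1 : q < 1 := by simp only [hqdef]; linarith
  have hSq : S < q := by simp only [hqdef]; linarith
  have hev : ∀ᶠ j in atTop, f j / f (j + 1) < q := (tendsto_order.1 h).2 q hSq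
  obtain ⟨N, hN⟩ := eventually_atTop.1 hev
  have hstep : ∀ j, N ≤ j → f j / q < f (j + 1) := by
    intro j hj
    have h1 := hN j hj
    rw [div_lt_iff₀ (hf (j + 1))] at h1
    rw [div_lt_iff₀ hq0]
    linarith [h1]
  have hQ : (1 : ℝ) < 1 / q := one_lt_one_div hq0 hq1
  have hgrow : ∀ m, f N * (1 / q) ^ m ≤ f (N + m) := by
    intro m
    induction m with
    | zero => simp
    | succ m ih =>
      have h2 := hstep (N + m) (Nat.le_add_right N m)
      have h3 : f (N + m) / q ≤ f (N + m + 1) := le_of_lt h2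
      calc f N * (1 / q) ^ (m + 1) = (f N * (1 / q) ^ m) / q := by
            rw [pow_succ]; field_simp
        _ ≤ f (N + m) / q := by gcongr
        _ ≤ f (N + m + 1) := h3
        _ = f (N + (m + 1)) := by ring_nf
  have hmono : Tendsto (fun m => f N * (1 / q) ^ m) atTop atTop := by
    exact Tendsto.const_mul_atTop (hf N) (tendsto_pow_atTop_atTop_of_one_lt hQ)
  have hshift : Tendsto (fun m => f (N + m)) atTop atTop :=
    tendsto_atTop_mono hgrow hmono
  have : Tendsto (fun m => f (m + N)) atTop atTop := by
    simpa [add_comm] using hshift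
  exact (tendsto_add_atTop_iff_nat N).1 this

/-- Sinkhorn iteration: all iterates have positive entries, and any entrywise limit
is doubly stochastic. -/
theorem stmt19 (n : ℕ) (hn : 0 < n) (K₀ : Matrix (Fin n) (Fin n) ℝ)
    (hpos : ∀ i j, 0 < K₀ i j)
    (r c : ℕ → Fin n → ℝ)
    (hr0 : ∀ i, r 0 i = 1) (hc0 : ∀ i, c 0 i = 1)
    (hc : ∀ j i, c (j + 1) i = 1 / ∑ k, K₀ k i * r j k)
    (hrr : ∀ j i, r (j + 1) i = 1 / ∑ k, K₀ i k * c j k)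
    (K : ℕ → Matrix (Fin n) (Fin n) ℝ)
    (hK : ∀ j i k, K j i k = r j i * K₀ i k * c j k) :
    (∀ j i k, 0 < K j i k) ∧
    (∀ Kinf : Matrix (Fin n) (Fin n) ℝ,
      (∀ i k, Tendsto (fun j => K j i k) atTop (nhds (Kinf i k))) →
      (∀ i, ∑ k, Kinf i k = 1) ∧ (∀ k, ∑ i, Kinf i k = 1)) := by
  haveI : Nonempty (Fin n) := ⟨⟨0, hn⟩⟩
  -- positivity of r and c
  have hrc : ∀ j, (∀ i, 0 < r j i) ∧ (∀ i, 0 < c j i) := by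
    intro j
    induction j with
    | zero => exact ⟨fun i => by rw [hr0]; norm_num, fun i => by rw [hc0]; norm_num⟩
    | succ j ih =>
      refine ⟨fun i => ?_, fun i => ?_⟩
      · rw [hrr]
        exact one_div_pos.2 (Finset.sum_pos (fun k _ => mul_pos (hpos i k) (ih.2 k))
          Finset.univ_nonempty)
      · rw [hc]
        exact one_div_pos.2 (Finset.sum_pos (fun k _ => mul_pos (hpos k i) (ih.1 k))
          Finset.univ_nonempty)
  have hrpos : ∀ j i, 0 < r j i := fun j => (hrc j).1
  have hcpos : ∀ j i, 0 < c j i := fun j => (hrc j).2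
  have hKpos : ∀ j i k, 0 < K j i k := fun j i k => by
    rw [hK]; exact mul_pos (mul_pos (hrpos j i) (hpos i k)) (hcpos j k)
  -- positivity of the normalizing sums
  have hApos : ∀ j i, 0 < ∑ k, K₀ i k * c j k := fun j i =>
    Finset.sum_pos (fun k _ => mul_pos (hpos i k) (hcpos j k)) Finset.univ_nonempty
  have hBpos : ∀ j k, 0 < ∑ i, K₀ i k * r j i := fun j k =>
    Finset.sum_pos (fun i _ => mul_pos (hpos i k) (hrpos j i)) Finset.univ_nonempty
  -- row and column sums of K j
  have hrow : ∀ j i, ∑ k, K j i k = r j i * ∑ k, K₀ i k * c j k := by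
    intro j i
    rw [Finset.mul_sum]
    exact Finset.sum_congr rfl fun k _ => by rw [hK]; ring
  have hcol : ∀ j k, ∑ i, K j i k = c j k * ∑ i, K₀ i k * r j i := by
    intro j k
    rw [Finset.mul_sum]
    exact Finset.sum_congr rfl fun i _ => by rw [hK]; ring
  -- ratios
  have hratio_r : ∀ j i, r j i / r (j + 1) i = ∑ k, K j i k := by
    intro j i
    rw [hrow, hrr, one_div, div_eq_mul_inv, inv_inv]
  have hratio_c : ∀ j k, c j k / c (j + 1) k = ∑ i, K j i k := by
    intro j k
    rw [hcol, hc, one_div, div_eq_mul_inv, inv_inv]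
  have hcount : ∑ _k : Fin n, (1 : ℝ) = (n : ℝ) := by
    simp
  -- key identity, rows
  have hkeyS : ∀ j, ∑ i, (∑ k, K (j + 1) i k) * (∑ k, K j i k) = (n : ℝ) := by
    intro j
    have step1 : ∀ i, (∑ k, K (j + 1) i k) * (∑ k, K j i k)
        = r j i * ∑ k, K₀ i k * c (j + 1) k := by
      intro i
      rw [hrow, hrow, hrr]
      have hA := (hApos j i).ne'
      field_simp
    calc ∑ i, (∑ k, K (j + 1) i k) * (∑ k, K j i k)
        = ∑ i, ∑ k, r j i * (K₀ i k * c (j + 1) k) := by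
          refine Finset.sum_congr rfl fun i _ => ?_
          rw [step1 i, Finset.mul_sum]
      _ = ∑ k, ∑ i, r j i * (K₀ i k * c (j + 1) k) := Finset.sum_comm
      _ = ∑ _k : Fin n, (1 : ℝ) := by
          refine Finset.sum_congr rfl fun k _ => ?_
          have : ∑ i, r j i * (K₀ i k * c (j + 1) k)
              = (∑ i, K₀ i k * r j i) * c (j + 1) k := by
            rw [Finset.sum_mul]
            exact Finset.sum_congr rfl fun i _ => by ring
          rw [this, hc, mul_one_div, div_self (hBpos j k).ne']
      _ = (n : ℝ) := hcount
  -- key identity, columns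
  have hkeyT : ∀ j, ∑ k, (∑ i, K (j + 1) i k) * (∑ i, K j i k) = (n : ℝ) := by
    intro j
    have step1 : ∀ k, (∑ i, K (j + 1) i k) * (∑ i, K j i k)
        = c j k * ∑ i, K₀ i k * r (j + 1) i := by
      intro k
      rw [hcol, hcol, hc]
      have hB := (hBpos j k).ne'
      field_simp
    calc ∑ k, (∑ i, K (j + 1) i k) * (∑ i, K j i k)
        = ∑ k, ∑ i, c j k * (K₀ i k * r (j + 1) i) := by
          refine Finset.sum_congr rfl fun k _ => ?_
          rw [step1 k, Finset.mul_sum]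
      _ = ∑ i, ∑ k, c j k * (K₀ i k * r (j + 1) i) := Finset.sum_comm
      _ = ∑ _i : Fin n, (1 : ℝ) := by
          refine Finset.sum_congr rfl fun i _ => ?_
          have : ∑ k, c j k * (K₀ i k * r (j + 1) i)
              = (∑ k, K₀ i k * c j k) * r (j + 1) i := by
            rw [Finset.sum_mul]
            exact Finset.sum_congr rfl fun k _ => by ring
          rw [this, hrr, mul_one_div, div_self (hApos j i).ne']
      _ = (n : ℝ) := hcount
  refine ⟨hKpos, fun Kinf hlim => ?_⟩
  set S : Fin n → ℝ := fun i => ∑ k, Kinf i k with hSdef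
  set T : Fin n → ℝ := fun k => ∑ i, Kinf i k with hTdef
  have hρ : ∀ i, Tendsto (fun j => ∑ k, K j i k) atTop (nhds (S i)) := fun i =>
    tendsto_finset_sum _ fun k _ => hlim i k
  have hγ : ∀ k, Tendsto (fun j => ∑ i, K j i k) atTop (nhds (T k)) := fun k =>
    tendsto_finset_sum _ fun i _ => hlim i k
  have hρ' : ∀ i, Tendsto (fun j => ∑ k, K (j + 1) i k) atTop (nhds (S i)) := fun i =>
    (hρ i).comp (tendsto_add_atTop_nat 1)
  have hγ' : ∀ k, Tendsto (fun j => ∑ i, K (j + 1) i k) atTop (nhds (T k)) := fun k =>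
    (hγ k).comp (tendsto_add_atTop_nat 1)
  have hSS : ∑ i, S i * S i = (n : ℝ) := by
    refine tendsto_nhds_unique
      (tendsto_finset_sum _ fun i _ => (hρ' i).mul (hρ i)) ?_
    simp only [hkeyS]
    exact tendsto_const_nhds
  have hTT : ∑ k, T k * T k = (n : ℝ) := by
    refine tendsto_nhds_unique
      (tendsto_finset_sum _ fun k _ => (hγ' k).mul (hγ k)) ?_
    simp only [hkeyT]
    exact tendsto_const_nhds
  have hST : ∑ i, S i = ∑ k, T k := Finset.sum_comm
  -- expansion of sums of squares
  have expand : ∀ g : Fin n → ℝ, ∑ x, (g x - 1) ^ 2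
      = ∑ x, g x * g x - 2 * ∑ x, g x + (n : ℝ) := by
    intro g
    have h1 : ∀ x ∈ Finset.univ, (g x - 1) ^ 2 = g x * g x - 2 * g x + 1 :=
      fun x _ => by ring
    rw [Finset.sum_congr rfl h1, Finset.sum_add_distrib, Finset.sum_sub_distrib,
      ← Finset.mul_sum, hcount]
  have hDzero : ∑ i, (S i - 1) ^ 2 = 0 := by
    by_contra hD0
    have hDpos : 0 < ∑ i, (S i - 1) ^ 2 :=
      lt_of_le_of_ne (Finset.sum_nonneg fun i _ => sq_nonneg _) (Ne.symm hD0)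
    have hDval : ∑ i, (S i - 1) ^ 2 = 2 * (n : ℝ) - 2 * ∑ i, S i := by
      rw [expand, hSS]; ring
    have hMS : ∑ i, S i < (n : ℝ) := by rw [hDval] at hDpos; linarith
    have hEval : ∑ k, (T k - 1) ^ 2 = 2 * (n : ℝ) - 2 * ∑ k, T k := by
      rw [expand, hTT]; ring
    have hMT : ∑ k, T k < (n : ℝ) := by rw [← hST]; exact hMS
    -- find a small row sum and a small column sum
    have hex_i : ∃ i, S i < 1 := by
      by_contra hall
      push_neg at hall
      have : (n : ℝ) ≤ ∑ i, S i := by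
        calc (n : ℝ) = ∑ _i : Fin n, (1 : ℝ) := hcount.symm
          _ ≤ ∑ i, S i := Finset.sum_le_sum fun i _ => hall i
      linarith
    have hex_k : ∃ k, T k < 1 := by
      by_contra hall
      push_neg at hall
      have : (n : ℝ) ≤ ∑ k, T k := by
        calc (n : ℝ) = ∑ _k : Fin n, (1 : ℝ) := hcount.symm
          _ ≤ ∑ k, T k := Finset.sum_le_sum fun k _ => hall k
      linarith
    obtain ⟨i0, hi0⟩ := hex_i
    obtain ⟨k0, hk0⟩ := hex_k
    have hrT : Tendsto (fun j => r j i0) atTop atTop := by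
      refine aux_growth19 _ (fun j => hrpos j i0) hi0 ?_
      have : (fun j => r j i0 / r (j + 1) i0) = fun j => ∑ k, K j i0 k :=
        funext fun j => hratio_r j i0
      rw [this]
      exact hρ i0
    have hcT : Tendsto (fun j => c j k0) atTop atTop := by
      refine aux_growth19 _ (fun j => hcpos j k0) hk0 ?_
      have : (fun j => c j k0 / c (j + 1) k0) = fun j => ∑ i, K j i k0 :=
        funext fun j => hratio_c j k0
      rw [this]
      exact hγ k0
    have hKT : Tendsto (fun j => K j i0 k0) atTop atTop := by
      have : (fun j => K j i0 k0) = fun j => r j i0 * K₀ i0 k0 * c j k0 :=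
        funext fun j => hK j i0 k0
      rw [this]
      exact (hrT.atTop_mul_const (hpos i0 k0)).atTop_mul_atTop₀ hcT
    exact not_tendsto_atTop_of_tendsto_nhds (hlim i0 k0) hKT
  have hEzero : ∑ k, (T k - 1) ^ 2 = 0 := by
    have h1 : ∑ i, (S i - 1) ^ 2 = 2 * (n : ℝ) - 2 * ∑ i, S i := by
      rw [expand, hSS]; ring
    have h2 : ∑ k, (T k - 1) ^ 2 = 2 * (n : ℝ) - 2 * ∑ k, T k := by
      rw [expand, hTT]; ring
    rw [h2, ← hST, ← h1, hDzero]
  constructor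
  · intro i
    have := (Finset.sum_eq_zero_iff_of_nonneg fun x _ => sq_nonneg (S x - 1)).1
      hDzero i (Finset.mem_univ i)
    have h2 : S i - 1 = 0 := by
      exact pow_eq_zero_iff (by norm_num) |>.1 this
    have : S i = 1 := by linarith
    exact this
  · intro k
    have := (Finset.sum_eq_zero_iff_of_nonneg fun x _ => sq_nonneg (T x - 1)).1
      hEzero k (Finset.mem_univ k)
    have h2 : T k - 1 = 0 := by
      exact pow_eq_zero_iff (by norm_num) |>.1 this
    have : T k = 1 := by linarith
    exact this
end
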